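/- For any n×n density matrix ρ ≠ I/n, there exist positive semidefinite matrices X, Y ≥ 0 such that Tr(ρ(XY + YX)) < 0. -/

import Mathlib

/-!
A state other than `I/n` is not a multiple of the identity, so it has eigenvalues `a > b ≥ 0`
with orthonormal eigenvectors `v₁, v₂`. For rank-one `X = |u⟩⟨u|`, `Y = |w⟩⟨w|` one has
`Tr ρ(XY + YX) = ⟨u,w⟩⟨w,ρu⟩ + ⟨w,u⟩⟨u,ρw⟩`, and `u = v₁ + v₂`, `w = (a + b)v₁ - 2a v₂` make this
`-2a(a - b)² < 0`.
-/

open scoped ComplexOrder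

namespace Matrix

variable {𝕜 : Type*} [RCLike 𝕜] {n : Type*} [Fintype n]

theorem trace_mul_vecMulVec_mul_vecMulVec {R : Type*} [CommSemiring R] (A : Matrix n n R)
    (u v w x : n → R) :
    (A * (vecMulVec u v * vecMulVec w x)).trace = (v ⬝ᵥ w) * (x ⬝ᵥ A *ᵥ u) := by
  rw [vecMulVec_mul_vecMulVec, mul_vecMulVec, trace_vecMulVec, dotProduct_smul, smul_eq_mul,
    dotProduct_comm x]

theorem exists_posSemidef_re_trace_mul_anticommutator_neg {A : Matrix n n 𝕜} {v₁ v₂ : n → 𝕜}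
    {a b : ℝ} (h₁ : A *ᵥ v₁ = a • v₁) (h₂ : A *ᵥ v₂ = b • v₂) (h₁₁ : star v₁ ⬝ᵥ v₁ = 1)
    (h₂₂ : star v₂ ⬝ᵥ v₂ = 1) (h₁₂ : star v₁ ⬝ᵥ v₂ = 0) (hab : a ≠ b) (ha : 0 < a) :
    ∃ X Y : Matrix n n 𝕜, X.PosSemidef ∧ Y.PosSemidef ∧
      RCLike.re (A * (X * Y + Y * X)).trace < 0 := by
  have h₂₁ : star v₂ ⬝ᵥ v₁ = 0 := by rw [star_dotProduct, h₁₂, star_zero]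
  have hdot : ∀ c₁ c₂ d₁ d₂ : ℝ, star (c₁ • v₁ + c₂ • v₂) ⬝ᵥ (d₁ • v₁ + d₂ • v₂)
      = ((c₁ * d₁ + c₂ * d₂ : ℝ) : 𝕜) := by
    intro c₁ c₂ d₁ d₂
    simp only [star_add, star_smul, star_trivial, add_dotProduct, dotProduct_add, smul_dotProduct,
      dotProduct_smul, h₁₁, h₁₂, h₂₁, h₂₂, RCLike.real_smul_eq_coe_mul]
    push_cast
    ring
  have hmulVec : ∀ c₁ c₂ : ℝ, A *ᵥ (c₁ • v₁ + c₂ • v₂) = (c₁ * a) • v₁ + (c₂ * b) • v₂ := by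
    intro c₁ c₂
    rw [mulVec_add, mulVec_smul, mulVec_smul, h₁, h₂, smul_smul, smul_smul]
  set u := (1 : ℝ) • v₁ + (1 : ℝ) • v₂
  set w := (a + b) • v₁ + (-(2 * a)) • v₂
  refine ⟨vecMulVec u (star u), vecMulVec w (star w), posSemidef_vecMulVec_self_star u,
    posSemidef_vecMulVec_self_star w, ?_⟩
  rw [mul_add, trace_add, trace_mul_vecMulVec_mul_vecMulVec,
    trace_mul_vecMulVec_mul_vecMulVec, hmulVec, hmulVec, hdot, hdot, hdot, hdot, ← RCLike.ofReal_mul,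
    ← RCLike.ofReal_mul, ← RCLike.ofReal_add, RCLike.ofReal_re]
  have hab' : 0 < (a - b) ^ 2 := sq_pos_of_ne_zero (sub_ne_zero.mpr hab)
  nlinarith [mul_pos ha hab']

namespace IsHermitian

variable [DecidableEq n] {A : Matrix n n 𝕜} (hA : A.IsHermitian)
include hA

theorem eq_smul_one_of_eigenvalues_eq {c : ℝ} (h : ∀ i, hA.eigenvalues i = c) :
    A = (c : 𝕜) • 1 := by
  have hdiag : diagonal (RCLike.ofReal ∘ hA.eigenvalues) = algebraMap 𝕜 (Matrix n n 𝕜) c := by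
    rw [algebraMap_eq_diagonal]
    congr 1
    ext i
    simp [h]
  rw [hA.spectral_theorem, hdiag, AlgHomClass.commutes, Algebra.algebraMap_eq_smul_one]

theorem exists_eigenvalues_lt (h : ∀ c : ℝ, A ≠ (c : 𝕜) • 1) :
    ∃ i j, hA.eigenvalues j < hA.eigenvalues i := by
  by_contra! hle
  rcases isEmpty_or_nonempty n with hn | ⟨⟨i₀⟩⟩
  · exact h 0 (Subsingleton.elim _ _)
  · exact h _ (hA.eq_smul_one_of_eigenvalues_eq fun i => le_antisymm (hle i i₀) (hle i₀ i))

theorem star_eigenvectorBasis_dotProduct (i j : n) :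
    star ⇑(hA.eigenvectorBasis i) ⬝ᵥ ⇑(hA.eigenvectorBasis j) = if i = j then 1 else 0 := by
  rw [dotProduct_comm, ← EuclideanSpace.inner_eq_star_dotProduct]
  exact orthonormal_iff_ite.mp hA.eigenvectorBasis.orthonormal i j

end IsHermitian

end Matrix

open Matrix

theorem state_not_maximally_mixed_detected {n : ℕ}
    (ρ : Matrix (Fin n) (Fin n) ℂ) (hρ : ρ.PosSemidef) (htr : ρ.trace = 1)
    (hne : ρ ≠ (n : ℂ)⁻¹ • 1) :
    ∃ X Y : Matrix (Fin n) (Fin n) ℂ, X.PosSemidef ∧ Y.PosSemidef ∧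
      (ρ * (X * Y + Y * X)).trace.re < 0 := by
  have hH := hρ.isHermitian
  have hscalar : ∀ c : ℝ, ρ ≠ (c : ℂ) • 1 := by
    rintro c rfl
    have hcn : (c : ℂ) * n = 1 := by simpa [trace_smul] using htr
    exact hne (by rw [eq_inv_of_mul_eq_one_left hcn])
  obtain ⟨i, j, hji⟩ := hH.exists_eigenvalues_lt hscalar
  have hij : i ≠ j := fun h => hji.ne (congrArg hH.eigenvalues h.symm)
  have horth := hH.star_eigenvectorBasis_dotProduct
  exact exists_posSemidef_re_trace_mul_anticommutator_neg (hH.mulVec_eigenvectorBasis i)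
    (hH.mulVec_eigenvectorBasis j) (by simpa using horth i i) (by simpa using horth j j)
    (by simpa [hij] using horth i j) hji.ne' ((hρ.eigenvalues_nonneg j).trans_lt hji)
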